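/- The map T ↦ T − v_n (deleting vertex v_n) is a bijection between the set of spanning trees of F_n containing exactly one of the edges {v_n v_{n-1}, v_n v_∞}, and pairs (T', c) where T' is a spanning tree of F_{n-1} and c ∈ {1, 2} indicates which edge was present; consequently the number of spanning trees of F_n using exactly one edge at v_n is 2·t_{n-1}. -/

import Mathlib

/-- The fan graph `F_n` on vertex set `Fin n`, where index `0` is the hub `v_∞`
and indices `1, …, n-1` correspond to the path vertices `v_2, …, v_n`. -/
def fanGraph (n : ℕ) : SimpleGraph (Fin n) :=
  SimpleGraph.fromRel (fun a b => (a : ℕ) = 0 ∨ ((a : ℕ) ≠ 0 ∧ (b : ℕ) = (a : ℕ) + 1))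

/-- The number of spanning trees of the fan graph `F_n`. -/
noncomputable def fanTreeCount (n : ℕ) : ℕ :=
  Nat.card {H : SimpleGraph (Fin n) // H ≤ fanGraph n ∧ H.IsTree}

section Aux
open SimpleGraph



variable {V : Type*} {V' : Type*} {G : SimpleGraph V} {G' : SimpleGraph V'}

lemma exists_edge_end : ∀ {a b : V} (w : G.Walk a b), a ≠ b →
    ∃ y, G.Adj y b ∧ s(y, b) ∈ w.edges := by
  intro a b w
  induction w with
  | nil => intro h; exact absurd rfl h
  | @cons a m b h p ih =>
    intro _
    by_cases hmb : m = b
    · subst hmb; exact ⟨a, h, by simp⟩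
    · obtain ⟨y, hy, hmem⟩ := ih hmb
      exact ⟨y, hy, by simp [hmem]⟩

lemma cycle_not_mem_pendant {v u : V} (hu : ∀ w, G.Adj v w → w = u)
    {a : V} {c : G.Walk a a} (hc : c.IsCycle) : v ∉ c.support := by
  classical
  intro hmem
  have hc' := hc.rotate hmem
  set c' := c.rotate v hmem with hc'def
  cases hcc : c' with
  | nil => rw [hcc] at hc'; exact hc'.not_of_nil
  | @cons _ m _ h p =>
    rw [hcc] at hc'
    have hm : m = u := hu m h
    subst hm
    rw [Walk.cons_isCycle_iff] at hc'
    obtain ⟨y, hy, hmem'⟩ := exists_edge_end p h.ne'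
    have : y = m := hu y hy.symm
    subst this
    exact hc'.2 (Sym2.eq_swap ▸ hmem')

lemma path_not_mem_pendant {v u : V} (hu : ∀ w, G.Adj v w → w = u)
    {a b : V} {p : G.Walk a b} (hp : p.IsPath) (ha : a ≠ v) (hb : b ≠ v) :
    v ∉ p.support := by
  classical
  intro hmem
  have hspec := p.take_spec hmem
  have hnodup : (p.takeUntil v hmem).edges.Disjoint (p.dropUntil v hmem).edges := by
    apply List.disjoint_of_nodup_append
    rw [← Walk.edges_append, hspec]
    exact hp.isTrail.edges_nodup
  obtain ⟨y, hy, hmem1⟩ := exists_edge_end (p.takeUntil v hmem) ha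
  rw [hu y hy.symm] at hmem1
  obtain ⟨y2, hy2, hmem2⟩ := exists_edge_end (p.dropUntil v hmem).reverse hb
  rw [hu y2 hy2.symm] at hmem2
  rw [Walk.edges_reverse, List.mem_reverse] at hmem2
  exact hnodup hmem1 hmem2

lemma exists_walk_map_eq (φ : G' →g G) (hinj : Function.Injective φ) {v : V}
    (hcov : ∀ z : V, z ≠ v → ∃ x, φ x = z)
    (hadj : ∀ a b : V', G.Adj (φ a) (φ b) → G'.Adj a b) :
    ∀ {s t : V} (w : G.Walk s t), v ∉ w.support → ∀ {x y : V'} (hx : φ x = s) (hy : φ y = t),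
      ∃ w' : G'.Walk x y, (w'.map φ).copy hx hy = w := by
  intro s t w
  induction w with
  | nil =>
    intro _ x y hx hy
    have : x = y := hinj (hx.trans hy.symm)
    subst this
    subst hx
    exact ⟨Walk.nil, by simp⟩
  | @cons a m b h p ih =>
    intro hv x y hx hy
    subst hx; subst hy
    simp only [Walk.support_cons, List.mem_cons] at hv
    push_neg at hv
    have hm : m ≠ v := fun he => hv.2 (he ▸ p.start_mem_support)
    obtain ⟨z, hz⟩ := hcov m hm
    obtain ⟨p', hp'⟩ := ih hv.2 hz rfl
    subst hz
    refine ⟨Walk.cons (hadj _ _ h) p', ?_⟩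
    simp only [Walk.copy_rfl_rfl] at hp' ⊢
    rw [Walk.map_cons, hp']

section updown
variable {n : ℕ}

/-- The canonical hom from a graph on `Fin (n-1)` to a compatible graph on `Fin n`. -/
def liftHom (G : SimpleGraph (Fin n)) (G' : SimpleGraph (Fin (n-1)))
    (hiso : ∀ a b, G.Adj (Fin.castLE (Nat.sub_le n 1) a) (Fin.castLE (Nat.sub_le n 1) b) ↔ G'.Adj a b) :
    G' →g G :=
  ⟨Fin.castLE (Nat.sub_le n 1), fun hab => (hiso _ _).mpr hab⟩

@[simp] lemma liftHom_apply (G : SimpleGraph (Fin n)) (G' : SimpleGraph (Fin (n-1))) (hiso)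
    (x : Fin (n-1)) : liftHom G G' hiso x = Fin.castLE (Nat.sub_le n 1) x := rfl

lemma liftHom_inj (G : SimpleGraph (Fin n)) (G' : SimpleGraph (Fin (n-1))) (hiso) :
    Function.Injective (liftHom G G' hiso) := by
  intro a b hab
  rw [liftHom_apply, liftHom_apply, Fin.castLE_inj] at hab
  exact hab

lemma liftHom_cov (G : SimpleGraph (Fin n)) (G' : SimpleGraph (Fin (n-1)))
    (hiso) {v : Fin n} (hv : (v : ℕ) = n - 1) :
    ∀ z : Fin n, z ≠ v → ∃ x, liftHom G G' hiso x = z := by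
  intro z hz
  have h1 := z.isLt
  have h2 : (z : ℕ) ≠ n - 1 := fun he => hz (Fin.ext (he.trans hv.symm))
  exact ⟨⟨z, by omega⟩, Fin.ext rfl⟩

lemma tree_down (hn : 3 ≤ n) (G : SimpleGraph (Fin n)) (G' : SimpleGraph (Fin (n-1)))
    (hiso : ∀ a b, G.Adj (Fin.castLE (Nat.sub_le n 1) a) (Fin.castLE (Nat.sub_le n 1) b) ↔ G'.Adj a b)
    {v u : Fin n} (hv : (v : ℕ) = n - 1)
    (hpend : ∀ w, G.Adj v w → w = u) (htree : G.IsTree) : G'.IsTree := by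
  classical
  have hinj := liftHom_inj G G' hiso
  have hcov := liftHom_cov G G' hiso hv
  have hadj : ∀ a b, G.Adj (liftHom G G' hiso a) (liftHom G G' hiso b) → G'.Adj a b :=
    fun a b hab => (hiso a b).mp hab
  have hne : ∀ x : Fin (n-1), liftHom G G' hiso x ≠ v := by
    intro x he
    have h1 : ((liftHom G G' hiso x : Fin n) : ℕ) = (v : ℕ) := congrArg Fin.val he
    rw [liftHom_apply, Fin.coe_castLE] at h1
    have h2 := x.isLt
    omega
  refine ⟨?_, ?_⟩
  · have hne' : Nonempty (Fin (n-1)) := ⟨⟨0, by omega⟩⟩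
    refine Connected.mk ?_
    intro x y
    obtain ⟨w⟩ := htree.isConnected.preconnected (liftHom G G' hiso x) (liftHom G G' hiso y)
    have hp := w.toPath.2
    have havoid := path_not_mem_pendant hpend hp (hne x) (hne y)
    obtain ⟨w', _⟩ := exists_walk_map_eq (liftHom G G' hiso) hinj hcov hadj
      (w.toPath : G.Walk _ _) havoid (x := x) (y := y) rfl rfl
    exact ⟨w'⟩
  · intro x c hc
    exact htree.IsAcyclic (c.map (liftHom G G' hiso)) (hc.map hinj)

lemma tree_up (hn : 3 ≤ n) (G : SimpleGraph (Fin n)) (G' : SimpleGraph (Fin (n-1)))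
    (hiso : ∀ a b, G.Adj (Fin.castLE (Nat.sub_le n 1) a) (Fin.castLE (Nat.sub_le n 1) b) ↔ G'.Adj a b)
    {v u : Fin n} (hv : (v : ℕ) = n - 1) (hu : (u : ℕ) < n - 1)
    (hadjvu : G.Adj v u)
    (hpend : ∀ w, G.Adj v w → w = u) (htree : G'.IsTree) : G.IsTree := by
  classical
  have hinj := liftHom_inj G G' hiso
  have hcov := liftHom_cov G G' hiso hv
  have hadj : ∀ a b, G.Adj (liftHom G G' hiso a) (liftHom G G' hiso b) → G'.Adj a b :=
    fun a b hab => (hiso a b).mp hab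
  have hfu : liftHom G G' hiso ⟨(u : ℕ), hu⟩ = u := Fin.ext rfl
  have hreach : ∀ x : Fin n, G.Reachable x u := by
    intro x
    by_cases hx : (x : ℕ) < n - 1
    · have := Reachable.map (liftHom G G' hiso)
        (htree.isConnected.preconnected ⟨(x : ℕ), hx⟩ ⟨(u : ℕ), hu⟩)
      rwa [hfu, show liftHom G G' hiso ⟨(x : ℕ), hx⟩ = x from Fin.ext rfl] at this
    · have hxv : x = v := Fin.ext (by have := x.isLt; omega)
      exact hxv ▸ hadjvu.reachable
  refine ⟨?_, ?_⟩
  · have hne' : Nonempty (Fin n) := ⟨v⟩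
    exact Connected.mk fun a b => (hreach a).trans (hreach b).symm
  · intro x c hc
    have havoid := cycle_not_mem_pendant hpend hc
    have hxv : x ≠ v := fun he => havoid (he ▸ c.start_mem_support)
    obtain ⟨x', hx'⟩ := hcov x hxv
    obtain ⟨c', hc'⟩ := exists_walk_map_eq (liftHom G G' hiso) hinj hcov hadj c havoid hx' hx'
    rw [← hc', Walk.isCycle_copy, Walk.map_isCycle_iff_of_injective hinj] at hc
    exact htree.IsAcyclic c' hc

end updown

lemma fan_adj {n : ℕ} (a b : Fin n) :
    (fanGraph n).Adj a b ↔ a ≠ b ∧ ((a : ℕ) = 0 ∨ (b : ℕ) = 0 ∨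
      (b : ℕ) = (a : ℕ) + 1 ∨ (a : ℕ) = (b : ℕ) + 1) := by
  rw [fanGraph, SimpleGraph.fromRel_adj]
  constructor <;> rintro ⟨h1, h2⟩ <;> exact ⟨h1, by omega⟩

lemma fan_adj_restrict {n : ℕ} (h : n - 1 ≤ n) (a b : Fin (n-1)) :
    (fanGraph n).Adj (Fin.castLE h a) (Fin.castLE h b) ↔ (fanGraph (n-1)).Adj a b := by
  simp only [fan_adj, Fin.coe_castLE, ne_eq, Fin.castLE_inj]

lemma fan_adj_last {n : ℕ} (hn : 3 ≤ n) (h : n - 1 < n) (w : Fin n) :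
    (fanGraph n).Adj ⟨n-1, h⟩ w ↔ (w : ℕ) = 0 ∨ (w : ℕ) = n - 2 := by
  rw [fan_adj]
  constructor
  · rintro ⟨h1, h2⟩
    have := w.isLt
    simp only [Fin.ne_iff_vne] at h1
    simp only [Fin.val_mk] at h1 h2 ⊢
    omega
  · intro h2
    have := w.isLt
    refine ⟨Fin.ne_of_val_ne ?_, ?_⟩ <;> simp only [Fin.val_mk] <;> omega

/-- The extension of a graph on `Fin (n-1)` by the pendant edge `(n-1, u)`. -/
def extGraph (n : ℕ) (T' : SimpleGraph (Fin (n-1))) (u : Fin n) : SimpleGraph (Fin n) :=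
  SimpleGraph.fromRel (fun a b =>
    (∃ (ha : (a:ℕ) < n-1) (hb : (b:ℕ) < n-1), T'.Adj ⟨a, ha⟩ ⟨b, hb⟩) ∨ ((a:ℕ) = n-1 ∧ b = u))

lemma ext_adj_small {n : ℕ} (T' : SimpleGraph (Fin (n-1))) (u : Fin n)
    (hu : (u:ℕ) = 0 ∨ (u:ℕ) = n-2) (hn : 3 ≤ n) (a b : Fin (n-1)) :
    (extGraph n T' u).Adj (Fin.castLE (Nat.sub_le n 1) a) (Fin.castLE (Nat.sub_le n 1) b)
      ↔ T'.Adj a b := by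
  rw [extGraph, SimpleGraph.fromRel_adj]
  constructor
  · rintro ⟨hne, (⟨ha, hb, hT⟩ | ⟨h1, h2⟩) | (⟨ha, hb, hT⟩ | ⟨h1, h2⟩)⟩
    · simpa using hT
    · rw [Fin.coe_castLE] at h1; have := a.isLt; omega
    · exact (by simpa using hT : T'.Adj b a).symm
    · rw [Fin.coe_castLE] at h1; have := b.isLt; omega
  · intro h
    refine ⟨fun he => h.ne (Fin.castLE_inj.mp he), Or.inl (Or.inl ?_)⟩
    exact ⟨by simpa using a.isLt, by simpa using b.isLt, by simpa using h⟩

lemma ext_adj_last {n : ℕ} (T' : SimpleGraph (Fin (n-1))) (u : Fin n)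
    (hu : (u:ℕ) = 0 ∨ (u:ℕ) = n-2) (hn : 3 ≤ n) (h : n - 1 < n) (w : Fin n) :
    (extGraph n T' u).Adj ⟨n-1, h⟩ w ↔ w = u := by
  rw [extGraph, SimpleGraph.fromRel_adj]
  constructor
  · rintro ⟨hne, (⟨ha, hb, hT⟩ | ⟨h1, h2⟩) | (⟨ha, hb, hT⟩ | ⟨h1, h2⟩)⟩
    · simp only [Fin.val_mk] at ha; omega
    · exact h2
    · simp only [Fin.val_mk] at hb; omega
    · exfalso
      have := congrArg Fin.val h2
      simp only [Fin.val_mk] at this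
      omega
  · intro hw
    subst hw
    refine ⟨fun he => ?_, Or.inl (Or.inr ⟨rfl, rfl⟩)⟩
    have := congrArg Fin.val he
    simp only [Fin.val_mk] at this
    omega

lemma ext_le {n : ℕ} (T' : SimpleGraph (Fin (n-1))) (u : Fin n)
    (hu : (u:ℕ) = 0 ∨ (u:ℕ) = n-2) (hn : 3 ≤ n)
    (hT'le : T' ≤ fanGraph (n-1)) : extGraph n T' u ≤ fanGraph n := by
  intro a b hab
  rw [extGraph, SimpleGraph.fromRel_adj] at hab
  rw [fan_adj]
  obtain ⟨hne, hcase⟩ := hab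
  refine ⟨hne, ?_⟩
  rcases hcase with (⟨ha, hb, hT⟩ | ⟨h1, h2⟩) | (⟨ha, hb, hT⟩ | ⟨h1, h2⟩)
  · have := hT'le hT
    rw [fan_adj] at this
    obtain ⟨-, hd⟩ := this
    simp only [Fin.val_mk] at hd
    omega
  · have := congrArg Fin.val h2
    omega
  · have := hT'le hT
    rw [fan_adj] at this
    obtain ⟨-, hd⟩ := this
    simp only [Fin.val_mk] at hd
    omega
  · have := congrArg Fin.val h2
    omega

lemma ext_comap {n : ℕ} (T' : SimpleGraph (Fin (n-1))) (u : Fin n)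
    (hu : (u:ℕ) = 0 ∨ (u:ℕ) = n-2) (hn : 3 ≤ n) :
    SimpleGraph.comap (Fin.castLE (Nat.sub_le n 1)) (extGraph n T' u) = T' := by
  ext a b
  exact ext_adj_small T' u hu hn a b

end Aux

set_option maxHeartbeats 1000000 in
/-- Deleting the vertex `v_n` (restricting to `Fin (n-1)`), together with recording
which of the two edges at `v_n` was present, is a bijection from the spanning trees of
`F_n` containing exactly one of the edges `v_n v_{n-1}`, `v_n v_∞` onto
(spanning trees of `F_{n-1}`) × (indicator). Consequently these trees number `2·t_{n-1}`. -/
theorem fan_tree_exactly_one_edge_bijection (n : ℕ) (hn : 3 ≤ n) :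
    Set.BijOn
      (fun H : SimpleGraph (Fin n) =>
        ((SimpleGraph.comap (Fin.castLE (by omega : n - 1 ≤ n)) H, 
          H.Adj ⟨n - 1, by omega⟩ ⟨n - 2, by omega⟩) : SimpleGraph (Fin (n - 1)) × Prop))
      {H | H ≤ fanGraph n ∧ H.IsTree ∧
        Xor' (H.Adj ⟨n - 1, by omega⟩ ⟨n - 2, by omega⟩) (H.Adj ⟨n - 1, by omega⟩ ⟨0, by omega⟩)}
      ({H' | H' ≤ fanGraph (n - 1) ∧ H'.IsTree} ×ˢ (Set.univ : Set Prop)) ∧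
    Nat.card {H : SimpleGraph (Fin n) // H ≤ fanGraph n ∧ H.IsTree ∧
        Xor' (H.Adj ⟨n - 1, by omega⟩ ⟨n - 2, by omega⟩) (H.Adj ⟨n - 1, by omega⟩ ⟨0, by omega⟩)}
      = 2 * fanTreeCount (n - 1) := by
  classical
  have hlt : n - 1 < n := by omega
  have hle : n - 1 ≤ n := Nat.sub_le n 1
  -- pendant structure for trees in the domain
  have hpend_of : ∀ H : SimpleGraph (Fin n), H ≤ fanGraph n →
      Xor' (H.Adj (⟨n - 1, by omega⟩ : Fin n) (⟨n - 2, by omega⟩ : Fin n)) (H.Adj (⟨n - 1, by omega⟩ : Fin n) (⟨0, by omega⟩ : Fin n)) →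
      ∃ u : Fin n, ((u:ℕ) = 0 ∨ (u:ℕ) = n - 2) ∧ H.Adj (⟨n - 1, by omega⟩ : Fin n) u ∧ ∀ w, H.Adj (⟨n - 1, by omega⟩ : Fin n) w → w = u := by
    intro H hleH hxor
    rcases hxor with ⟨hP, hn0⟩ | ⟨h0, hnP⟩
    · refine ⟨(⟨n - 2, by omega⟩ : Fin n), Or.inr rfl, hP, ?_⟩
      intro w hw
      have hv := hleH hw
      rw [fan_adj_last hn hlt] at hv
      rcases hv with h0' | hP'
      · exact absurd (show H.Adj (⟨n - 1, by omega⟩ : Fin n) (⟨0, by omega⟩ : Fin n) from (Fin.ext h0' : w = (⟨0, by omega⟩ : Fin n)) ▸ hw) hn0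
      · exact Fin.ext hP'
    · refine ⟨(⟨0, by omega⟩ : Fin n), Or.inl rfl, h0, ?_⟩
      intro w hw
      have hv := hleH hw
      rw [fan_adj_last hn hlt] at hv
      rcases hv with h0' | hP'
      · exact Fin.ext h0'
      · exact absurd (show H.Adj (⟨n - 1, by omega⟩ : Fin n) (⟨n - 2, by omega⟩ : Fin n) from (Fin.ext hP' : w = (⟨n - 2, by omega⟩ : Fin n)) ▸ hw) hnP
  have key : Set.BijOn
      (fun H : SimpleGraph (Fin n) =>
        ((SimpleGraph.comap (Fin.castLE (by omega : n - 1 ≤ n)) H, H.Adj (⟨n - 1, by omega⟩ : Fin n) (⟨n - 2, by omega⟩ : Fin n)) :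
          SimpleGraph (Fin (n - 1)) × Prop))
      {H | H ≤ fanGraph n ∧ H.IsTree ∧ Xor' (H.Adj (⟨n - 1, by omega⟩ : Fin n) (⟨n - 2, by omega⟩ : Fin n)) (H.Adj (⟨n - 1, by omega⟩ : Fin n) (⟨0, by omega⟩ : Fin n))}
      ({H' | H' ≤ fanGraph (n - 1) ∧ H'.IsTree} ×ˢ (Set.univ : Set Prop)) := by
    refine ⟨?_, ?_, ?_⟩
    -- MapsTo
    · rintro H ⟨hleH, htree, hxor⟩
      obtain ⟨u, hu01, hadj_u, hpend⟩ := hpend_of H hleH hxor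
      have hu_lt : (u:ℕ) < n - 1 := by omega
      have hiso : ∀ a b, H.Adj (Fin.castLE (Nat.sub_le n 1) a) (Fin.castLE (Nat.sub_le n 1) b) ↔
          (SimpleGraph.comap (Fin.castLE (by omega : n - 1 ≤ n)) H).Adj a b :=
        fun a b => Iff.rfl
      have htree' := tree_down hn H _ hiso rfl hpend htree
      have hres : SimpleGraph.comap (Fin.castLE (by omega : n - 1 ≤ n)) H ≤ fanGraph (n - 1) := by
        intro a b hab
        exact (fan_adj_restrict hle a b).mp (hleH hab)
      exact ⟨⟨hres, htree'⟩, trivial⟩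
    -- InjOn
    · rintro H1 ⟨hle1, htree1, hxor1⟩ H2 ⟨hle2, htree2, hxor2⟩ heq
      have hfst : SimpleGraph.comap (Fin.castLE (by omega : n - 1 ≤ n)) H1 =
          SimpleGraph.comap (Fin.castLE (by omega : n - 1 ≤ n)) H2 := congrArg Prod.fst heq
      have hsnd : H1.Adj (⟨n - 1, by omega⟩ : Fin n) (⟨n - 2, by omega⟩ : Fin n) ↔ H2.Adj (⟨n - 1, by omega⟩ : Fin n) (⟨n - 2, by omega⟩ : Fin n) := iff_of_eq (congrArg Prod.snd heq)
      have key2 : ∀ (Ha Hb : SimpleGraph (Fin n)), Ha ≤ fanGraph n →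
          Xor' (Ha.Adj (⟨n - 1, by omega⟩ : Fin n) (⟨n - 2, by omega⟩ : Fin n)) (Ha.Adj (⟨n - 1, by omega⟩ : Fin n) (⟨0, by omega⟩ : Fin n)) → Xor' (Hb.Adj (⟨n - 1, by omega⟩ : Fin n) (⟨n - 2, by omega⟩ : Fin n)) (Hb.Adj (⟨n - 1, by omega⟩ : Fin n) (⟨0, by omega⟩ : Fin n)) →
          (Ha.Adj (⟨n - 1, by omega⟩ : Fin n) (⟨n - 2, by omega⟩ : Fin n) ↔ Hb.Adj (⟨n - 1, by omega⟩ : Fin n) (⟨n - 2, by omega⟩ : Fin n)) → ∀ w, Ha.Adj (⟨n - 1, by omega⟩ : Fin n) w → Hb.Adj (⟨n - 1, by omega⟩ : Fin n) w := by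
        intro Ha Hb hlea xa xb hiff w hw
        have hval := hlea hw
        rw [fan_adj_last hn hlt] at hval
        rcases hval with h0 | hP
        · have hw0 : w = (⟨0, by omega⟩ : Fin n) := Fin.ext h0
          rw [hw0] at hw ⊢
          rcases xa with ⟨haP, han0⟩ | ⟨ha0, hanP⟩
          · exact absurd hw han0
          · rcases xb with ⟨hbP, hbn0⟩ | ⟨hb0, hbnP⟩
            · exact absurd (hiff.mpr hbP) hanP
            · exact hb0
        · have hwP : w = (⟨n - 2, by omega⟩ : Fin n) := Fin.ext hP
          rw [hwP] at hw ⊢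
          exact hiff.mp hw
      ext a b
      by_cases hA : (a:ℕ) < n - 1
      · by_cases hB : (b:ℕ) < n - 1
        · have ha' : Fin.castLE (by omega : n - 1 ≤ n) ⟨(a:ℕ), hA⟩ = a := Fin.ext rfl
          have hb' : Fin.castLE (by omega : n - 1 ≤ n) ⟨(b:ℕ), hB⟩ = b := Fin.ext rfl
          have e : (SimpleGraph.comap (Fin.castLE (by omega : n - 1 ≤ n)) H1).Adj
                ⟨(a:ℕ), hA⟩ ⟨(b:ℕ), hB⟩ =
              (SimpleGraph.comap (Fin.castLE (by omega : n - 1 ≤ n)) H2).Adj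
                ⟨(a:ℕ), hA⟩ ⟨(b:ℕ), hB⟩ := by rw [hfst]
          rw [← ha', ← hb']
          exact iff_of_eq e
        · have hb' : b = (⟨n - 1, by omega⟩ : Fin n) :=
            Fin.ext (show (b:ℕ) = n - 1 by have := b.isLt; omega)
          rw [hb']
          constructor
          · intro h
            exact (key2 H1 H2 hle1 hxor1 hxor2 hsnd a h.symm).symm
          · intro h
            exact (key2 H2 H1 hle2 hxor2 hxor1 hsnd.symm a h.symm).symm
      · have ha' : a = (⟨n - 1, by omega⟩ : Fin n) :=
          Fin.ext (show (a:ℕ) = n - 1 by have := a.isLt; omega)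
        rw [ha']
        by_cases hB : (b:ℕ) < n - 1
        · exact ⟨key2 H1 H2 hle1 hxor1 hxor2 hsnd b, key2 H2 H1 hle2 hxor2 hxor1 hsnd.symm b⟩
        · have hb' : b = (⟨n - 1, by omega⟩ : Fin n) :=
            Fin.ext (show (b:ℕ) = n - 1 by have := b.isLt; omega)
          rw [hb']
          exact iff_of_false (H1.loopless.irrefl _) (H2.loopless.irrefl _)
    -- SurjOn
    · rintro ⟨T', p⟩ ⟨⟨hT'le, hT'tree⟩, -⟩
      rcases Classical.em p with hp | hp
      · -- use the edge (⟨n - 1, by omega⟩ : Fin n)-(⟨n - 2, by omega⟩ : Fin n)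
        have hu : (((⟨n - 2, by omega⟩ : Fin n):ℕ) = 0 ∨ ((⟨n - 2, by omega⟩ : Fin n):ℕ) = n - 2) := Or.inr rfl
        set H := extGraph n T' (⟨n - 2, by omega⟩ : Fin n) with hH
        have hlast := ext_adj_last T' (⟨n - 2, by omega⟩ : Fin n) hu hn hlt
        have hadjP : H.Adj (⟨n - 1, by omega⟩ : Fin n) (⟨n - 2, by omega⟩ : Fin n) := (hlast (⟨n - 2, by omega⟩ : Fin n)).mpr rfl
        have hnadj0 : ¬ H.Adj (⟨n - 1, by omega⟩ : Fin n) (⟨0, by omega⟩ : Fin n) := by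
          intro h
          have := congrArg Fin.val ((hlast (⟨0, by omega⟩ : Fin n)).mp h)
          simp only [Fin.val_mk] at this
          omega
        have hcomap := ext_comap T' (⟨n - 2, by omega⟩ : Fin n) hu hn
        have htree : H.IsTree := by
          refine tree_up hn H T' (fun a b => ?_) rfl
            (by show n - 2 < n - 1; omega) hadjP (fun w hw => (hlast w).mp hw) hT'tree
          rw [ext_adj_small T' (⟨n - 2, by omega⟩ : Fin n) hu hn a b]
        refine ⟨H, ⟨ext_le T' (⟨n - 2, by omega⟩ : Fin n) hu hn hT'le, htree, Or.inl ⟨hadjP, hnadj0⟩⟩, ?_⟩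
        refine Prod.ext ?_ ?_
        · exact hcomap
        · exact propext ⟨fun _ => hp, fun _ => hadjP⟩
      · -- use the edge (⟨n - 1, by omega⟩ : Fin n)-(⟨0, by omega⟩ : Fin n)
        have hu : (((⟨0, by omega⟩ : Fin n):ℕ) = 0 ∨ ((⟨0, by omega⟩ : Fin n):ℕ) = n - 2) := Or.inl rfl
        set H := extGraph n T' (⟨0, by omega⟩ : Fin n) with hH
        have hlast := ext_adj_last T' (⟨0, by omega⟩ : Fin n) hu hn hlt
        have hadj0 : H.Adj (⟨n - 1, by omega⟩ : Fin n) (⟨0, by omega⟩ : Fin n) := (hlast (⟨0, by omega⟩ : Fin n)).mpr rfl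
        have hnadjP : ¬ H.Adj (⟨n - 1, by omega⟩ : Fin n) (⟨n - 2, by omega⟩ : Fin n) := by
          intro h
          have := congrArg Fin.val ((hlast (⟨n - 2, by omega⟩ : Fin n)).mp h)
          simp only [Fin.val_mk] at this
          omega
        have hcomap := ext_comap T' (⟨0, by omega⟩ : Fin n) hu hn
        have htree : H.IsTree := by
          refine tree_up hn H T' (fun a b => ?_) rfl
            (by show 0 < n - 1; omega) hadj0 (fun w hw => (hlast w).mp hw) hT'tree
          rw [ext_adj_small T' (⟨0, by omega⟩ : Fin n) hu hn a b]
        refine ⟨H, ⟨ext_le T' (⟨0, by omega⟩ : Fin n) hu hn hT'le, htree, Or.inr ⟨hadj0, hnadjP⟩⟩, ?_⟩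
        refine Prod.ext ?_ ?_
        · exact hcomap
        · exact propext ⟨fun h => absurd h hnadjP, fun h => absurd h hp⟩
  refine ⟨key, ?_⟩
  calc Nat.card {H : SimpleGraph (Fin n) // H ≤ fanGraph n ∧ H.IsTree ∧
        Xor' (H.Adj (⟨n - 1, by omega⟩ : Fin n) (⟨n - 2, by omega⟩ : Fin n)) (H.Adj (⟨n - 1, by omega⟩ : Fin n) (⟨0, by omega⟩ : Fin n))}
      = Nat.card {H : SimpleGraph (Fin n) | H ≤ fanGraph n ∧ H.IsTree ∧
        Xor' (H.Adj (⟨n - 1, by omega⟩ : Fin n) (⟨n - 2, by omega⟩ : Fin n)) (H.Adj (⟨n - 1, by omega⟩ : Fin n) (⟨0, by omega⟩ : Fin n))} :=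
        Nat.card_congr (Equiv.subtypeEquivRight fun _ => Iff.rfl)
    _ = Nat.card (({H' | H' ≤ fanGraph (n - 1) ∧ H'.IsTree} ×ˢ (Set.univ : Set Prop)) :
          Set (SimpleGraph (Fin (n - 1)) × Prop)) := Nat.card_congr (Set.BijOn.equiv _ key)
    _ = Nat.card ({H' : SimpleGraph (Fin (n - 1)) | H' ≤ fanGraph (n - 1) ∧ H'.IsTree} ×
          (Set.univ : Set Prop)) := Nat.card_congr (Equiv.Set.prod _ _)
    _ = Nat.card {H' : SimpleGraph (Fin (n - 1)) | H' ≤ fanGraph (n - 1) ∧ H'.IsTree} *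
          Nat.card (Set.univ : Set Prop) := Nat.card_prod _ _
    _ = 2 * fanTreeCount (n - 1) := by
        have h2 : Nat.card (Set.univ : Set Prop) = 2 := by
          rw [Nat.card_congr (Equiv.Set.univ Prop), Nat.card_eq_fintype_card, Fintype.card_prop]
        have h3 : Nat.card {H' : SimpleGraph (Fin (n-1)) | H' ≤ fanGraph (n - 1) ∧ H'.IsTree}
            = fanTreeCount (n - 1) := by
          rw [fanTreeCount]
          exact Nat.card_congr (Equiv.subtypeEquivRight fun _ => Iff.rfl)
        rw [h2, h3, Nat.mul_comm]
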